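/- arXiv:2211.06175 — 3 statements merged into one kernel-verified Lean document; each statement's English description precedes it below -/
import Mathlib

section
/- If $a < 0 \le c$ for real numbers $a, c$, then $a + \sqrt{a^2 + c^4} \le c^2$, and consequently $\frac{a + \sqrt{a^2+c^4}}{1 + \sqrt{1+c^2}} \le \frac{c^2}{1+\sqrt{1+c^2}} \le c$. -/
theorem stmt_1 (a c : ℝ) (ha : a < 0) (hc : 0 ≤ c) :
    a + Real.sqrt (a ^ 2 + c ^ 4) ≤ c ^ 2 ∧
    (a + Real.sqrt (a ^ 2 + c ^ 4)) / (1 + Real.sqrt (1 + c ^ 2)) ≤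
      c ^ 2 / (1 + Real.sqrt (1 + c ^ 2)) ∧
    c ^ 2 / (1 + Real.sqrt (1 + c ^ 2)) ≤ c := by
  have h1 : a + Real.sqrt (a ^ 2 + c ^ 4) ≤ c ^ 2 := by
    have hs : Real.sqrt (a ^ 2 + c ^ 4) ≤ c ^ 2 - a := by
      rw [show a ^ 2 + c ^ 4 = (c ^ 2 - a) ^ 2 - (-2 * a * c ^ 2) by ring]
      calc Real.sqrt ((c ^ 2 - a) ^ 2 - (-2 * a * c ^ 2))
          ≤ Real.sqrt ((c ^ 2 - a) ^ 2) := by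
            apply Real.sqrt_le_sqrt; nlinarith [sq_nonneg c]
        _ = c ^ 2 - a := by
            rw [Real.sqrt_sq (by nlinarith [sq_nonneg c])]
    linarith
  have hden : 0 < 1 + Real.sqrt (1 + c ^ 2) := by
    have := Real.sqrt_nonneg (1 + c ^ 2); linarith
  refine ⟨h1, div_le_div_of_nonneg_right h1 hden.le, ?_⟩
  rw [div_le_iff₀ hden]
  have hsc : c ≤ Real.sqrt (1 + c ^ 2) := by
    have h2 := Real.sq_sqrt (show (0:ℝ) ≤ 1 + c ^ 2 by positivity)
    nlinarith [Real.sqrt_nonneg (1 + c ^ 2)]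
  nlinarith
end

section
/- Let $\phi(x) = -\frac{a + \sqrt{a^2 + \|u^{max} b\|^4}}{\|b\|^2 (1 + \sqrt{1 + \|u^{max} b\|^2})} b^T$ for $b \ne 0$ and $\phi(x) = 0$ for $b = 0$, where $a \in \mathbb{R}$, $b \in \mathbb{R}^{1 \times m}$ a row vector, and $u^{max} > 0$. If $a \le \|u^{max} b\|$, then $\|\phi(x)\| \le u^{max}$ and $a + b \cdot \phi(x) \le 0$. -/
open scoped Classical

theorem stmt_3 (m : ℕ) (a : ℝ) (b : EuclideanSpace ℝ (Fin m)) (umax : ℝ)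
    (humax : 0 < umax) (ha : a ≤ ‖umax • b‖)
    (φ : EuclideanSpace ℝ (Fin m))
    (hφ : φ = if b = 0 then 0 else
      (-((a + Real.sqrt (a ^ 2 + ‖umax • b‖ ^ 4)) /
          (‖b‖ ^ 2 * (1 + Real.sqrt (1 + ‖umax • b‖ ^ 2))))) • b) :
    ‖φ‖ ≤ umax ∧ a + inner ℝ b φ ≤ (0 : ℝ) := by
  by_cases hb : b = 0
  · subst hb
    rw [if_pos rfl] at hφ
    subst hφ
    simp only [norm_zero, inner_zero_right, inner_zero_left, add_zero]
    simp only [smul_zero, norm_zero] at ha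
    constructor
    · linarith
    · simpa using ha
  · rw [if_neg hb] at hφ
    have hbn : 0 < ‖b‖ := norm_pos_iff.mpr hb
    set U : ℝ := ‖umax • b‖ with hU
    have hUval : U = umax * ‖b‖ := by
      rw [hU, norm_smul, Real.norm_eq_abs, abs_of_pos humax]
    have hUpos : 0 < U := by rw [hUval]; positivity
    set s : ℝ := Real.sqrt (a ^ 2 + U ^ 4) with hs
    set t : ℝ := Real.sqrt (1 + U ^ 2) with ht
    have hs0 : 0 ≤ s := Real.sqrt_nonneg _
    have ht0 : 0 ≤ t := Real.sqrt_nonneg _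
    have hs2 : s ^ 2 = a ^ 2 + U ^ 4 := Real.sq_sqrt (by positivity)
    have ht2 : t ^ 2 = 1 + U ^ 2 := Real.sq_sqrt (by positivity)
    have hsa : -a ≤ s := by
      have h1 : |a| ≤ s := by
        rw [← Real.sqrt_sq_eq_abs]
        exact Real.sqrt_le_sqrt (by nlinarith [pow_pos hUpos 4])
      linarith [neg_abs_le a]
    have ht1 : 1 ≤ t := by nlinarith
    have hT0 : 0 ≤ U * t := mul_nonneg hUpos.le ht0
    -- key inequality 1 : a + s ≤ U + U * t
    have hR0 : 0 ≤ (U - a) + U * t := by linarith [ha]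
    have key0 : s ≤ (U - a) + U * t := by
      have hsq : a ^ 2 + U ^ 4 ≤ ((U - a) + U * t) ^ 2 := by
        have hT2 : (U * t) ^ 2 = U ^ 2 + U ^ 4 := by rw [mul_pow, ht2]; ring
        nlinarith [mul_nonneg (sub_nonneg.mpr ha) (add_nonneg hUpos.le hT0)]
      calc s ≤ Real.sqrt (((U - a) + U * t) ^ 2) := Real.sqrt_le_sqrt hsq
        _ = (U - a) + U * t := Real.sqrt_sq hR0
    have key1 : a + s ≤ U + U * t := by linarith
    -- key inequality 2 : a * t ≤ s
    have key2 : a * t ≤ s := by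
      by_cases ha0 : a ≤ 0
      · have : a * t ≤ 0 := mul_nonpos_of_nonpos_of_nonneg ha0 ht0
        linarith
      · push_neg at ha0
        have hat : 0 ≤ a * t := mul_nonneg ha0.le ht0
        have hsq : (a * t) ^ 2 ≤ a ^ 2 + U ^ 4 := by
          have h2 : a ^ 2 ≤ U ^ 2 := by nlinarith
          nlinarith [sq_nonneg U]
        calc a * t = Real.sqrt ((a * t) ^ 2) := (Real.sqrt_sq hat).symm
          _ ≤ s := Real.sqrt_le_sqrt hsq
    -- denominator positivity
    have hD : 0 < ‖b‖ ^ 2 * (1 + t) := by positivity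
    set c : ℝ := (a + s) / (‖b‖ ^ 2 * (1 + t)) with hc
    have hc0 : 0 ≤ c := div_nonneg (by linarith) hD.le
    constructor
    · rw [hφ, norm_smul, Real.norm_eq_abs, abs_neg, abs_of_nonneg hc0, hc]
      rw [div_mul_eq_mul_div, div_le_iff₀ hD]
      have key1' : a + s ≤ umax * ‖b‖ + umax * ‖b‖ * t := by
        rw [hUval] at key1; linarith
      nlinarith [mul_le_mul_of_nonneg_right key1' hbn.le]
    · rw [hφ, real_inner_smul_right, real_inner_self_eq_norm_sq]
      have hcb : c * ‖b‖ ^ 2 = (a + s) / (1 + t) := by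
        rw [hc]; field_simp
      have hle : a ≤ (a + s) / (1 + t) := by
        rw [le_div_iff₀ (by linarith : (0:ℝ) < 1 + t)]
        linarith [key2]
      linarith [hle, hcb.ge, hcb.le]
end

section
/- With $B$ as defined via the sigmoid formula $B(F) = B_{min} + \frac{B_{max}-B_{min}}{1 + \exp(-k_B(l_D - F)/(F(l_X - F)))}$ on $(0, l_X)$ and $B \equiv B_{min}$ on $[l_X, \infty)$, where $k_B > 0$ is constant, $B_{min} < 0 < B_{max}$, $0 < l_D < l_X$: the derivative $B'(F)$ tends to $0$ as $F \to l_X^-$, so the piecewise extension of $B$ is continuously differentiable at $F = l_X$. -/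
open Real Filter Set Topology

theorem stmt_12 (Bmin Bmax lD lX kB : ℝ)
    (hBmin : Bmin < 0) (hBmax : 0 < Bmax) (hlD : 0 < lD) (hlX : lD < lX)
    (hkB : 0 < kB)
    (B : ℝ → ℝ)
    (hB : ∀ F : ℝ, 0 < F → F < lX →
      B F = Bmin + (Bmax - Bmin) / (1 + Real.exp (-(kB * (lD - F)) / (F * (lX - F)))))
    (hBend : ∀ F : ℝ, lX ≤ F → B F = Bmin) :
    Filter.Tendsto (deriv B) (nhdsWithin lX (Set.Iio lX)) (nhds 0) ∧
    HasDerivAt B 0 lX := by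
  have hlX0 : 0 < lX := hlD.trans hlX
  set g : ℝ → ℝ := fun F => -(kB * (lD - F)) / (F * (lX - F)) with hgdef
  set u : ℝ → ℝ := fun F => (lX - F)⁻¹ with hudef
  have hBM : 0 < Bmax - Bmin := by linarith
  -- u tends to atTop
  have hu : Tendsto u (𝓝[<] lX) atTop := by
    apply tendsto_inv_nhdsGT_zero.comp
    have h0 : Tendsto (fun F : ℝ => lX - F) (𝓝 lX) (𝓝 (lX - lX)) :=
      (tendsto_const_nhds.sub tendsto_id)
    rw [sub_self] at h0
    refine tendsto_nhdsWithin_of_tendsto_nhds_of_eventually_within _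
      (h0.mono_left nhdsWithin_le_nhds) ?_
    filter_upwards [self_mem_nhdsWithin] with F hF
    exact sub_pos.mpr (Set.mem_Iio.mp hF)
  -- eventually F ∈ Ioo lD lX
  have hevIoo : ∀ᶠ F in 𝓝[<] lX, F ∈ Ioo lD lX := by
    filter_upwards [self_mem_nhdsWithin,
      eventually_nhdsWithin_of_eventually_nhds (eventually_gt_nhds hlX)] with F h1 h2
    exact ⟨h2, h1⟩
  set c : ℝ := kB * (lX - lD) / lX with hcdef
  have hc : 0 < c := div_pos (mul_pos hkB (by linarith)) hlX0
  have hc0 : c ≠ 0 := ne_of_gt hc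
  -- eventually g F ≥ (c/2) * u F
  have hglb : ∀ᶠ F in 𝓝[<] lX, c / 2 * u F ≤ g F := by
    have hcont : Tendsto (fun F : ℝ => kB * (F - lD) / F) (𝓝[<] lX) (𝓝 c) := by
      rw [hcdef]
      exact ((tendsto_const_nhds.mul (tendsto_id.sub tendsto_const_nhds)).div
        tendsto_id hlX0.ne').mono_left nhdsWithin_le_nhds
    have hev : ∀ᶠ F in 𝓝[<] lX, c / 2 ≤ kB * (F - lD) / F :=
      hcont.eventually_const_le (by linarith)
    filter_upwards [hev, hevIoo] with F h1 h2
    have hF0 : 0 < F := hlD.trans h2.1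
    have hlf : 0 < lX - F := sub_pos.mpr h2.2
    have hgf : g F = kB * (F - lD) / F * u F := by
      simp only [hgdef, hudef]
      field_simp
      ring
    rw [hgf]
    have hu0 : (0:ℝ) ≤ u F := by
      simp only [hudef]
      positivity
    exact mul_le_mul_of_nonneg_right h1 hu0
  -- key decay lemma
  have key : ∀ n : ℕ, Tendsto (fun F => u F ^ n * Real.exp (-g F)) (𝓝[<] lX) (𝓝 0) := by
    intro n
    have hbd0 : Tendsto (fun F => (c / 2 * u F) ^ n * Real.exp (-(c / 2 * u F)))
        (𝓝[<] lX) (𝓝 0) :=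
      (Real.tendsto_pow_mul_exp_neg_atTop_nhds_zero n).comp
        (hu.const_mul_atTop (by positivity))
    have hbd : Tendsto (fun F => (2 / c) ^ n * ((c / 2 * u F) ^ n * Real.exp (-(c / 2 * u F))))
        (𝓝[<] lX) (𝓝 ((2 / c) ^ n * 0)) := hbd0.const_mul _
    rw [mul_zero] at hbd
    apply squeeze_zero'
    · filter_upwards [self_mem_nhdsWithin] with F hF
      have hlf : 0 < lX - F := sub_pos.mpr (Set.mem_Iio.mp hF)
      have hu0 : (0:ℝ) ≤ u F := by simp only [hudef]; positivity
      exact mul_nonneg (pow_nonneg hu0 n) (Real.exp_pos _).le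
    · filter_upwards [hglb, self_mem_nhdsWithin] with F h1 h2
      have hlf : 0 < lX - F := sub_pos.mpr (Set.mem_Iio.mp h2)
      have hu0 : (0:ℝ) ≤ u F := by simp only [hudef]; positivity
      calc u F ^ n * Real.exp (-g F)
          ≤ u F ^ n * Real.exp (-(c / 2 * u F)) :=
            mul_le_mul_of_nonneg_left (Real.exp_le_exp.mpr (by linarith)) (pow_nonneg hu0 n)
        _ = (2 / c) ^ n * ((c / 2 * u F) ^ n * Real.exp (-(c / 2 * u F))) := by
            rw [← mul_assoc, ← mul_pow]
            congr 2
            field_simp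
    · exact hbd
  -- derivative formula on Ioo 0 lX
  have hBderiv : ∀ F ∈ Ioo (0:ℝ) lX, HasDerivAt B
      (-((Bmax - Bmin) * (Real.exp (g F) *
        ((kB * (F * (lX - F)) - -(kB * (lD - F)) * (lX - 2 * F)) / (F * (lX - F)) ^ 2)))
        / (1 + Real.exp (g F)) ^ 2) F := by
    intro F hF
    have hF0 : 0 < F := hF.1
    have hlf : 0 < lX - F := sub_pos.mpr hF.2
    have hdne : F * (lX - F) ≠ 0 := by positivity
    have h1 : HasDerivAt (fun F : ℝ => F * (lX - F)) (lX - 2 * F) F := by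
      have := (hasDerivAt_id F).mul ((hasDerivAt_const F lX).sub (hasDerivAt_id F))
      refine this.congr_deriv ?_
      simp only [id_eq, Pi.sub_apply]
      ring
    have h2 : HasDerivAt (fun F : ℝ => -(kB * (lD - F))) kB F := by
      have := (((hasDerivAt_const F kB).mul
        ((hasDerivAt_const F lD).sub (hasDerivAt_id F)))).neg
      refine this.congr_deriv ?_
      simp only [id_eq, Pi.sub_apply]
      ring
    have hg' : HasDerivAt g
        ((kB * (F * (lX - F)) - -(kB * (lD - F)) * (lX - 2 * F)) / (F * (lX - F)) ^ 2) F :=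
      h2.div h1 hdne
    have hNne : (1 : ℝ) + Real.exp (g F) ≠ 0 := by positivity
    have hden : HasDerivAt (fun F => 1 + Real.exp (g F))
        (Real.exp (g F) * ((kB * (F * (lX - F)) - -(kB * (lD - F)) * (lX - 2 * F))
          / (F * (lX - F)) ^ 2)) F := by
      have := (hasDerivAt_const F (1:ℝ)).add hg'.exp
      rwa [zero_add] at this
    have hφ : HasDerivAt (fun F => Bmin + (Bmax - Bmin) / (1 + Real.exp (g F)))
        (-((Bmax - Bmin) * (Real.exp (g F) *
          ((kB * (F * (lX - F)) - -(kB * (lD - F)) * (lX - 2 * F)) / (F * (lX - F)) ^ 2)))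
          / (1 + Real.exp (g F)) ^ 2) F := by
      have := (hasDerivAt_const F Bmin).add ((hasDerivAt_const F (Bmax - Bmin)).div hden hNne)
      refine this.congr_deriv ?_
      ring
    apply hφ.congr_of_eventuallyEq
    filter_upwards [isOpen_Ioo.mem_nhds hF] with x hx
    exact hB x hx.1 hx.2
  constructor
  · -- tendsto deriv
    apply squeeze_zero_norm' (a := fun F => (Bmax - Bmin) * (2 * kB * lX ^ 2 / lD ^ 2) *
      (u F ^ 2 * Real.exp (-g F)))
    · filter_upwards [hevIoo] with F hF
      have hF0 : 0 < F := hlD.trans hF.1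
      have hlf : 0 < lX - F := sub_pos.mpr hF.2
      have hd := hBderiv F ⟨hF0, hF.2⟩
      rw [hd.deriv]
      rw [Real.norm_eq_abs, abs_div, abs_neg, abs_mul, abs_mul]
      have hE : 0 < Real.exp (g F) := Real.exp_pos _
      rw [abs_of_pos hBM, abs_of_pos hE,
        abs_of_pos (show (0:ℝ) < (1 + Real.exp (g F)) ^ 2 by positivity)]
      have hGbd : |(kB * (F * (lX - F)) - -(kB * (lD - F)) * (lX - 2 * F)) / (F * (lX - F)) ^ 2|
          ≤ 2 * kB * lX ^ 2 / lD ^ 2 * u F ^ 2 := by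
        rw [abs_div, abs_of_pos (show (0:ℝ) < (F * (lX - F)) ^ 2 by positivity)]
        have hnum : |kB * (F * (lX - F)) - -(kB * (lD - F)) * (lX - 2 * F)| ≤ 2 * kB * lX ^ 2 := by
          have h1 : |kB * (F * (lX - F))| ≤ kB * lX ^ 2 := by
            rw [abs_of_pos (by positivity)]
            have hFl : F * (lX - F) ≤ lX ^ 2 := by
              nlinarith [sq_nonneg (lX - F), mul_pos hlX0 hF0]
            exact mul_le_mul_of_nonneg_left hFl hkB.le
          have h2 : |-(kB * (lD - F)) * (lX - 2 * F)| ≤ kB * lX ^ 2 := by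
            rw [abs_mul, abs_neg, abs_mul]
            have ha : |lD - F| ≤ lX := by rw [abs_le]; constructor <;> nlinarith
            have hb : |lX - 2 * F| ≤ lX := by rw [abs_le]; constructor <;> nlinarith
            calc |kB| * |lD - F| * |lX - 2 * F| ≤ kB * lX * lX := by
                  rw [abs_of_pos hkB]
                  exact mul_le_mul (mul_le_mul_of_nonneg_left ha (le_of_lt hkB)) hb
                    (abs_nonneg _) (by positivity)
              _ = kB * lX ^ 2 := by ring
          calc |kB * (F * (lX - F)) - -(kB * (lD - F)) * (lX - 2 * F)|
              ≤ |kB * (F * (lX - F))| + |-(kB * (lD - F)) * (lX - 2 * F)| := abs_sub _ _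
            _ ≤ 2 * kB * lX ^ 2 := by linarith
        rw [div_le_iff₀ (by positivity)]
        calc |kB * (F * (lX - F)) - -(kB * (lD - F)) * (lX - 2 * F)| ≤ 2 * kB * lX ^ 2 := hnum
          _ ≤ 2 * kB * lX ^ 2 / lD ^ 2 * u F ^ 2 * (F * (lX - F)) ^ 2 := by
              have hre : 2 * kB * lX ^ 2 / lD ^ 2 * u F ^ 2 * (F * (lX - F)) ^ 2
                  = 2 * kB * lX ^ 2 * (F ^ 2 / lD ^ 2) := by
                simp only [hudef]
                field_simp
              rw [hre]
              have h3 : (1:ℝ) ≤ F ^ 2 / lD ^ 2 := by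
                rw [le_div_iff₀ (by positivity)]
                nlinarith [mul_pos (sub_pos.mpr hF.1) (show (0:ℝ) < F + lD by linarith)]
              nlinarith [mul_le_mul_of_nonneg_left h3
                (show (0:ℝ) ≤ 2 * kB * lX ^ 2 by positivity)]
      have hfrac : Real.exp (g F) / (1 + Real.exp (g F)) ^ 2 ≤ Real.exp (-g F) := by
        rw [Real.exp_neg, div_le_iff₀ (by positivity)]
        have hinv : Real.exp (g F) * (Real.exp (g F))⁻¹ = 1 := mul_inv_cancel₀ hE.ne'
        nlinarith [hE, inv_pos.mpr hE]
      calc (Bmax - Bmin) * (Real.exp (g F) *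
            |(kB * (F * (lX - F)) - -(kB * (lD - F)) * (lX - 2 * F)) / (F * (lX - F)) ^ 2|)
            / (1 + Real.exp (g F)) ^ 2
          = (Bmax - Bmin) *
            |(kB * (F * (lX - F)) - -(kB * (lD - F)) * (lX - 2 * F)) / (F * (lX - F)) ^ 2|
            * (Real.exp (g F) / (1 + Real.exp (g F)) ^ 2) := by ring
        _ ≤ (Bmax - Bmin) * (2 * kB * lX ^ 2 / lD ^ 2 * u F ^ 2) * Real.exp (-g F) := by
            have hu0 : (0:ℝ) ≤ u F := by simp only [hudef]; positivity
            apply mul_le_mul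
            · exact mul_le_mul_of_nonneg_left hGbd (le_of_lt hBM)
            · exact hfrac
            · positivity
            · positivity
        _ = (Bmax - Bmin) * (2 * kB * lX ^ 2 / lD ^ 2) * (u F ^ 2 * Real.exp (-g F)) := by ring
    · have := (key 2).const_mul ((Bmax - Bmin) * (2 * kB * lX ^ 2 / lD ^ 2))
      simpa using this
  · -- HasDerivAt B 0 lX
    rw [hasDerivAt_iff_tendsto_slope]
    rw [← nhdsLT_sup_nhdsGT, tendsto_sup]
    have hBlX : B lX = Bmin := hBend lX le_rfl
    constructor
    · apply squeeze_zero_norm' (a := fun F => (Bmax - Bmin) * (u F * Real.exp (-g F)))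
      · filter_upwards [hevIoo] with F hF
        have hF0 : 0 < F := hlD.trans hF.1
        have hlf : 0 < lX - F := sub_pos.mpr hF.2
        have hE : 0 < Real.exp (g F) := Real.exp_pos _
        have hBF : B F = Bmin + (Bmax - Bmin) / (1 + Real.exp (g F)) := hB F hF0 hF.2
        have hslope : slope B lX F = ((Bmax - Bmin) / (1 + Real.exp (g F))) / (F - lX) := by
          rw [slope_def_field, hBF, hBlX]
          ring
        rw [hslope, Real.norm_eq_abs, abs_div, abs_div, abs_of_pos hBM,
          abs_of_pos (show (0:ℝ) < 1 + Real.exp (g F) by positivity),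
          abs_of_neg (show F - lX < 0 by linarith)]
        have h1 : (Bmax - Bmin) / (1 + Real.exp (g F)) ≤ (Bmax - Bmin) * Real.exp (-g F) := by
          rw [Real.exp_neg, div_le_iff₀ (by positivity)]
          have hinv : Real.exp (g F) * (Real.exp (g F))⁻¹ = 1 := mul_inv_cancel₀ hE.ne'
          nlinarith [hE, inv_pos.mpr hE]
        have hu0 : (0:ℝ) ≤ u F := by simp only [hudef]; positivity
        calc (Bmax - Bmin) / (1 + Real.exp (g F)) / -(F - lX)
            = (Bmax - Bmin) / (1 + Real.exp (g F)) * u F := by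
              simp only [hudef, neg_sub, div_eq_mul_inv]
          _ ≤ (Bmax - Bmin) * Real.exp (-g F) * u F :=
              mul_le_mul_of_nonneg_right h1 hu0
          _ = (Bmax - Bmin) * (u F * Real.exp (-g F)) := by ring
      · have h := (key 1).const_mul (Bmax - Bmin)
        rw [mul_zero] at h
        exact h.congr (fun F => by rw [pow_one])
    · have hev : slope B lX =ᶠ[𝓝[>] lX] fun _ => 0 := by
        filter_upwards [self_mem_nhdsWithin] with F hF
        rw [slope_def_field, hBend F (le_of_lt (Set.mem_Ioi.mp hF)), hBlX, sub_self,
          zero_div]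
      exact Tendsto.congr' hev.symm tendsto_const_nhds
end
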